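/- The Cartesian product of two constrained polynomial zonotopes ⟨c₁,G₁,E₁,A₁,b₁,R₁⟩ ⊂ ℝⁿ and ⟨c₂,G₂,E₂,A₂,b₂,R₂⟩ ⊂ ℝ^w equals the constrained polynomial zonotope ⟨[c₁;c₂], blockdiag(G₁,G₂), blockdiag(E₁,E₂), blockdiag(A₁,A₂), [b₁;b₂], blockdiag(R₁,R₂)⟩ ⊂ ℝ^{n+w}. -/

import Mathlib

open Finset Matrix Set

noncomputable section

/-- Monomial `∏ k, α k ^ e k`. -/
def mono {p : Type*} [Fintype p] (α : p → ℝ) (e : p → ℕ) : ℝ := ∏ k, α k ^ e k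

/-- All factors lie in `[-1,1]`. -/
def inBox {p : Type*} (α : p → ℝ) : Prop := ∀ k, α k ∈ Set.Icc (-1 : ℝ) 1

/-- Constrained polynomial zonotope. -/
def CPZ {n p h m q : Type*} [Fintype n] [Fintype p] [Fintype h] [Fintype m] [Fintype q]
    (c : n → ℝ) (G : Matrix n h ℝ) (E : Matrix p h ℕ)
    (A : Matrix m q ℝ) (b : m → ℝ) (R : Matrix p q ℕ) : Set (n → ℝ) :=
  {x | ∃ α : p → ℝ, inBox α ∧
    (∑ i, mono α (fun k => R k i) • (fun j => A j i)) = b ∧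
    x = c + ∑ i, mono α (fun k => E k i) • (fun j => G j i)}

/-! With block-diagonal exponent matrices every monomial of the product CPZ involves the factors
of only one block, so its polynomial map evaluated at `Sum.elim α₁ α₂` is the `Sum.elim` of the two
polynomial maps; splitting the factor vector as `Sum.elim (α ∘ inl) (α ∘ inr)` gives the converse. -/

section

lemma inBox_sumElim {p₁ p₂ : Type*} {α₁ : p₁ → ℝ} {α₂ : p₂ → ℝ} :
    inBox (Sum.elim α₁ α₂) ↔ inBox α₁ ∧ inBox α₂ := by
  simp only [inBox, Sum.forall, Sum.elim_inl, Sum.elim_inr]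

variable {n w p₁ p₂ h₁ h₂ : Type*} [Fintype p₁] [Fintype p₂] [Fintype h₁] [Fintype h₂]

lemma mono_sumElim (α₁ : p₁ → ℝ) (α₂ : p₂ → ℝ) (e₁ : p₁ → ℕ) (e₂ : p₂ → ℕ) :
    mono (Sum.elim α₁ α₂) (Sum.elim e₁ e₂) = mono α₁ e₁ * mono α₂ e₂ := by
  simp only [mono, Fintype.prod_sum_type, Sum.elim_inl, Sum.elim_inr]

lemma mono_zero (α : p₁ → ℝ) : mono α 0 = 1 := by
  simp [mono]

def polyMap (G : Matrix n h₁ ℝ) (E : Matrix p₁ h₁ ℕ) (α : p₁ → ℝ) : n → ℝ :=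
  ∑ i, mono α (fun k => E k i) • (fun j => G j i)

lemma polyMap_fromBlocks (G₁ : Matrix n h₁ ℝ) (E₁ : Matrix p₁ h₁ ℕ)
    (G₂ : Matrix w h₂ ℝ) (E₂ : Matrix p₂ h₂ ℕ) (α₁ : p₁ → ℝ) (α₂ : p₂ → ℝ) :
    polyMap (fromBlocks G₁ 0 0 G₂) (fromBlocks E₁ 0 0 E₂) (Sum.elim α₁ α₂) =
      Sum.elim (polyMap G₁ E₁ α₁) (polyMap G₂ E₂ α₂) := by
  have col₁ (i : h₁) : (fun k => fromBlocks E₁ 0 0 E₂ k (Sum.inl i)) =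
      Sum.elim (fun k => E₁ k i) 0 := by
    funext k; cases k <;> rfl
  have col₂ (i : h₂) : (fun k => fromBlocks E₁ 0 0 E₂ k (Sum.inr i)) =
      Sum.elim (0 : p₁ → ℕ) (fun k => E₂ k i) := by
    funext k; cases k <;> rfl
  funext j
  cases j <;>
    simp [polyMap, Fintype.sum_sum_type, col₁, col₂, mono_sumElim, mono_zero]

lemma mem_CPZ_iff {m q : Type*} [Fintype n] [Fintype m] [Fintype q] {c : n → ℝ}
    {G : Matrix n h₁ ℝ} {E : Matrix p₁ h₁ ℕ} {A : Matrix m q ℝ} {b : m → ℝ}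
    {R : Matrix p₁ q ℕ} {x : n → ℝ} :
    x ∈ CPZ c G E A b R ↔
      ∃ α : p₁ → ℝ, inBox α ∧ polyMap A R α = b ∧ x = c + polyMap G E α :=
  Iff.rfl

end

/-- Cartesian product of two CPZs. -/
theorem CPZ_cartesian_product {n w p₁ p₂ h₁ h₂ m₁ m₂ q₁ q₂ : ℕ}
    (c₁ : Fin n → ℝ) (G₁ : Matrix (Fin n) (Fin h₁) ℝ) (E₁ : Matrix (Fin p₁) (Fin h₁) ℕ)
    (A₁ : Matrix (Fin m₁) (Fin q₁) ℝ) (b₁ : Fin m₁ → ℝ) (R₁ : Matrix (Fin p₁) (Fin q₁) ℕ)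
    (c₂ : Fin w → ℝ) (G₂ : Matrix (Fin w) (Fin h₂) ℝ) (E₂ : Matrix (Fin p₂) (Fin h₂) ℕ)
    (A₂ : Matrix (Fin m₂) (Fin q₂) ℝ) (b₂ : Fin m₂ → ℝ) (R₂ : Matrix (Fin p₂) (Fin q₂) ℕ) :
    {x : Fin n ⊕ Fin w → ℝ | ∃ s₁ ∈ CPZ c₁ G₁ E₁ A₁ b₁ R₁, ∃ s₂ ∈ CPZ c₂ G₂ E₂ A₂ b₂ R₂,
      x = Sum.elim s₁ s₂} =
    CPZ (Sum.elim c₁ c₂) (Matrix.fromBlocks G₁ 0 0 G₂) (Matrix.fromBlocks E₁ 0 0 E₂)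
      (Matrix.fromBlocks A₁ 0 0 A₂) (Sum.elim b₁ b₂) (Matrix.fromBlocks R₁ 0 0 R₂) := by
  ext x
  simp only [Set.mem_ofPred_eq, mem_CPZ_iff]
  constructor
  · rintro ⟨_, ⟨α₁, hα₁, hb₁, rfl⟩, _, ⟨α₂, hα₂, hb₂, rfl⟩, rfl⟩
    refine ⟨Sum.elim α₁ α₂, inBox_sumElim.2 ⟨hα₁, hα₂⟩, ?_, ?_⟩
    · rw [polyMap_fromBlocks, hb₁, hb₂]
    · rw [polyMap_fromBlocks, Sum.elim_add_add]
  · rintro ⟨α, hα, hb, rfl⟩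
    rw [← Sum.elim_comp_inl_inr α] at hα hb ⊢
    rw [polyMap_fromBlocks, Sum.elim_eq_iff] at hb
    obtain ⟨hα₁, hα₂⟩ := inBox_sumElim.1 hα
    exact ⟨_, ⟨_, hα₁, hb.1, rfl⟩, _, ⟨_, hα₂, hb.2, rfl⟩,
      by rw [polyMap_fromBlocks, Sum.elim_add_add]⟩
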